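/- arXiv:2306.08900 — 5 statements merged into one kernel-verified Lean document; each statement's English description precedes it below -/
import Mathlib

section
/- Let n ≥ 1 and let A₁, …, Aₙ be finite nonempty action sets. For each agent i let Qᵢ : Aᵢ → ℝ and set Vᵢ = max_{aᵢ ∈ Aᵢ} Qᵢ(aᵢ). Let V_tot ∈ ℝ, let wᵢ^q : A₁ × ⋯ × Aₙ → ℝ be nonnegative weight functions, and define Q_tot(a) = V_tot + Σ_{i=1}^n wᵢ^q(a)·(Qᵢ(aᵢ) − Vᵢ). Then max_{a ∈ A₁ × ⋯ × Aₙ} Q_tot(a) = V_tot. -/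
/-- For the coupled value factorization
`Q_tot(a) = V_tot + Σᵢ wᵢ^q(a)·(Qᵢ(aᵢ) − Vᵢ)` with `Vᵢ = max_{aᵢ} Qᵢ(aᵢ)` and
nonnegative weights `wᵢ^q`, the maximum of `Q_tot` over joint actions equals `V_tot`. -/
theorem omac_max_qtot_eq_vtot (n : ℕ) (hn : 1 ≤ n) (A : Fin n → Type*)
    [∀ i, Fintype (A i)] [∀ i, Nonempty (A i)]
    (Q : ∀ i, A i → ℝ)
    (V : Fin n → ℝ)
    (hV : ∀ i, V i = Finset.univ.sup' Finset.univ_nonempty (Q i))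
    (Vtot : ℝ)
    (wq : Fin n → (∀ i, A i) → ℝ)
    (hwq : ∀ i a, 0 ≤ wq i a)
    (Qtot : (∀ i, A i) → ℝ)
    (hQtot : ∀ a, Qtot a = Vtot + ∑ i, wq i a * (Q i (a i) - V i)) :
    Finset.univ.sup' Finset.univ_nonempty Qtot = Vtot := by

  apply le_antisymm
  · apply Finset.sup'_le
    intro a _
    rw [hQtot a]
    have : ∑ i, wq i a * (Q i (a i) - V i) ≤ 0 := by
      apply Finset.sum_nonpos
      intro i _
      apply mul_nonpos_of_nonneg_of_nonpos (hwq i a)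
      rw [sub_nonpos, hV i]
      exact Finset.le_sup' (Q i) (Finset.mem_univ (a i))
    linarith
  · classical
    choose b hb using fun i => Finset.exists_mem_eq_sup' (Finset.univ_nonempty (α := A i)) (Q i)
    have h : Qtot (fun i => b i) = Vtot := by
      rw [hQtot]
      have : ∀ i ∈ Finset.univ, wq i (fun i => b i) * (Q i (b i) - V i) = 0 := by
        intro i _
        have : Q i (b i) = V i := by rw [hV i, (hb i).2]
        rw [this, sub_self, mul_zero]
      rw [Finset.sum_congr rfl this, Finset.sum_const_zero, add_zero]
    rw [← h]
    exact Finset.le_sup' Qtot (Finset.mem_univ _)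
end

section
/- Let n ≥ 1 and let A₁, …, Aₙ be finite nonempty action sets. For each agent i let Qᵢ : Aᵢ → ℝ and set Vᵢ = max_{aᵢ ∈ Aᵢ} Qᵢ(aᵢ). Let V_tot ∈ ℝ, let wᵢ^q : A₁ × ⋯ × Aₙ → ℝ be nonnegative weight functions, and define Q_tot(a) = V_tot + Σ_{i=1}^n wᵢ^q(a)·(Qᵢ(aᵢ) − Vᵢ). If a* = (a₁*, …, aₙ*) is a joint action such that aᵢ* maximizes Qᵢ over Aᵢ for every i, then a* maximizes Q_tot over A₁ × ⋯ × Aₙ; i.e., the tuple of individual greedy actions is a greedy joint action (the Individual-Global-Max condition holds for this factorization). -/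
/-- IGM condition for the factorization: if each component `astar i` of a
joint action `astar` maximizes the local Q-function `Q i`, then `astar` maximizes the
factored global Q-function `Q_tot`. -/
theorem omac_igm (n : ℕ) (hn : 1 ≤ n) (A : Fin n → Type*)
    [∀ i, Fintype (A i)] [∀ i, Nonempty (A i)]
    (Q : ∀ i, A i → ℝ)
    (V : Fin n → ℝ)
    (hV : ∀ i, V i = Finset.univ.sup' Finset.univ_nonempty (Q i))
    (Vtot : ℝ)
    (wq : Fin n → (∀ i, A i) → ℝ)
    (hwq : ∀ i a, 0 ≤ wq i a)
    (Qtot : (∀ i, A i) → ℝ)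
    (hQtot : ∀ a, Qtot a = Vtot + ∑ i, wq i a * (Q i (a i) - V i))
    (astar : ∀ i, A i)
    (hstar : ∀ i, ∀ b : A i, Q i b ≤ Q i (astar i)) :
    ∀ a : ∀ i, A i, Qtot a ≤ Qtot astar := by
  intro a
  have hVeq : ∀ i, V i = Q i (astar i) := by
    intro i
    rw [hV i]
    apply le_antisymm
    · exact Finset.sup'_le _ _ fun b _ => hstar i b
    · exact Finset.le_sup' _ (Finset.mem_univ _)
  rw [hQtot a, hQtot astar]
  have h1 : ∑ i, wq i astar * (Q i (astar i) - V i) = 0 := by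
    apply Finset.sum_eq_zero
    intro i _
    rw [hVeq i]; ring
  have h2 : ∑ i, wq i a * (Q i (a i) - V i) ≤ 0 := by
    apply Finset.sum_nonpos
    intro i _
    apply mul_nonpos_of_nonneg_of_nonpos (hwq i a)
    rw [hVeq i]
    linarith [hstar i (a i)]
  rw [h1]; linarith
end

section
/- Fix τ ∈ (0,1) and let X be a real random variable with E[X²] < ∞. A real number m minimizes the asymmetric least-squares objective E[L₂^τ(X − m)] if and only if it satisfies the first-order condition τ·E[(X − m)₊] = (1 − τ)·E[(m − X)₊], where u₊ = max(u,0) denotes the positive part. -/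
open MeasureTheory

/-- The asymmetric squared loss `L₂^τ(u) = |τ − 𝟙(u<0)|·u²`, i.e. `τu²` for `u ≥ 0` and
`(1−τ)u²` for `u < 0` (for `τ ∈ (0,1)`). -/
noncomputable def expectileLoss (τ u : ℝ) : ℝ := if u < 0 then (1 - τ) * u ^ 2 else τ * u ^ 2

lemma expectileLoss_pt_lower {τ : ℝ} (hτ0 : 0 < τ) (hτ1 : τ < 1) (u v : ℝ) :
    (2 * τ * max u 0 - 2 * (1 - τ) * max (-u) 0) * (v - u)
      ≤ expectileLoss τ v - expectileLoss τ u := by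
  unfold expectileLoss
  rcases lt_or_ge u 0 with hu | hu <;> rcases lt_or_ge v 0 with hv | hv
  · rw [if_pos hu, if_pos hv, max_eq_right hu.le, max_eq_left (by linarith : (0:ℝ) ≤ -u)]
    nlinarith [sq_nonneg (u - v)]
  · rw [if_pos hu, if_neg (not_lt.mpr hv), max_eq_right hu.le,
      max_eq_left (by linarith : (0:ℝ) ≤ -u)]
    nlinarith [sq_nonneg (u - v), mul_nonneg hv (neg_nonneg.mpr hu.le), sq_nonneg u, sq_nonneg v,
      mul_nonneg (mul_nonneg hτ0.le hv) (neg_nonneg.mpr hu.le),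
      mul_nonneg (mul_nonneg (by linarith : (0:ℝ) ≤ 1 - τ) hv) (neg_nonneg.mpr hu.le)]
  · rw [if_neg (not_lt.mpr hu), if_pos hv, max_eq_left hu, max_eq_right (by linarith : -u ≤ 0)]
    nlinarith [sq_nonneg (u - v), mul_nonneg hu (neg_nonneg.mpr hv.le), sq_nonneg u, sq_nonneg v,
      mul_nonneg (mul_nonneg hτ0.le hu) (neg_nonneg.mpr hv.le),
      mul_nonneg (mul_nonneg (by linarith : (0:ℝ) ≤ 1 - τ) hu) (neg_nonneg.mpr hv.le)]
  · rw [if_neg (not_lt.mpr hu), if_neg (not_lt.mpr hv), max_eq_left hu,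
      max_eq_right (by linarith : -u ≤ 0)]
    nlinarith [sq_nonneg (u - v)]

lemma expectileLoss_pt_upper {τ : ℝ} (hτ0 : 0 < τ) (hτ1 : τ < 1) (u v : ℝ) :
    expectileLoss τ v - expectileLoss τ u
      ≤ (2 * τ * max u 0 - 2 * (1 - τ) * max (-u) 0) * (v - u) + (v - u) ^ 2 := by
  unfold expectileLoss
  rcases lt_or_ge u 0 with hu | hu <;> rcases lt_or_ge v 0 with hv | hv
  · rw [if_pos hu, if_pos hv, max_eq_right hu.le, max_eq_left (by linarith : (0:ℝ) ≤ -u)]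
    nlinarith [sq_nonneg (u - v)]
  · rw [if_pos hu, if_neg (not_lt.mpr hv), max_eq_right hu.le,
      max_eq_left (by linarith : (0:ℝ) ≤ -u)]
    nlinarith [sq_nonneg (u - v), mul_nonneg hv (neg_nonneg.mpr hu.le), sq_nonneg u, sq_nonneg v,
      mul_nonneg (mul_nonneg hτ0.le hv) (neg_nonneg.mpr hu.le),
      mul_nonneg (mul_nonneg (by linarith : (0:ℝ) ≤ 1 - τ) hv) (neg_nonneg.mpr hu.le)]
  · rw [if_neg (not_lt.mpr hu), if_pos hv, max_eq_left hu, max_eq_right (by linarith : -u ≤ 0)]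
    nlinarith [sq_nonneg (u - v), mul_nonneg hu (neg_nonneg.mpr hv.le), sq_nonneg u, sq_nonneg v,
      mul_nonneg (mul_nonneg hτ0.le hu) (neg_nonneg.mpr hv.le),
      mul_nonneg (mul_nonneg (by linarith : (0:ℝ) ≤ 1 - τ) hu) (neg_nonneg.mpr hv.le)]
  · rw [if_neg (not_lt.mpr hu), if_neg (not_lt.mpr hv), max_eq_left hu,
      max_eq_right (by linarith : -u ≤ 0)]
    nlinarith [sq_nonneg (u - v)]

/-- for `τ ∈ (0,1)` and a square-integrable real random variable `X`, a real
number `m` minimizes `E[L₂^τ(X − m)]` iff it satisfies the first-order condition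
`τ·E[(X − m)₊] = (1 − τ)·E[(m − X)₊]`. -/
theorem expectile_first_order_condition {Ω : Type*} [MeasureSpace Ω]
    [IsProbabilityMeasure (volume : Measure Ω)]
    (τ : ℝ) (hτ : τ ∈ Set.Ioo (0 : ℝ) 1)
    (X : Ω → ℝ) (hX : MemLp X 2) (m : ℝ) :
    (∀ m' : ℝ,
        ∫ ω, expectileLoss τ (X ω - m) ≤ ∫ ω, expectileLoss τ (X ω - m')) ↔
      τ * ∫ ω, max (X ω - m) 0 = (1 - τ) * ∫ ω, max (m - X ω) 0 := by
  obtain ⟨hτ0, hτ1⟩ := hτ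
  have hXi : Integrable X := hX.integrable one_le_two
  have hloss : ∀ c : ℝ, Integrable (fun ω => expectileLoss τ (X ω - c)) := by
    intro c
    have hXc : MemLp (fun ω => X ω - c) 2 := hX.sub (memLp_const c)
    have hsq : Integrable (fun ω => (X ω - c) ^ 2) := hXc.integrable_sq
    refine hsq.mono' ?_ ?_
    · have hm : Measurable (fun u : ℝ => expectileLoss τ u) := by
        unfold expectileLoss
        exact Measurable.ite (measurableSet_lt measurable_id measurable_const)
          (by fun_prop) (by fun_prop)
      exact (hm.comp_aemeasurable hXc.aestronglyMeasurable.aemeasurable).aestronglyMeasurable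
    · filter_upwards with ω
      unfold expectileLoss
      rw [Real.norm_eq_abs]
      split_ifs <;> rw [abs_of_nonneg (by nlinarith [sq_nonneg (X ω - c)])] <;>
        nlinarith [sq_nonneg (X ω - c)]
  have hpos : ∀ c : ℝ, Integrable (fun ω => max (X ω - c) 0) := fun c =>
    (hXi.sub (integrable_const c)).pos_part
  have hneg : ∀ c : ℝ, Integrable (fun ω => max (c - X ω) 0) := fun c =>
    ((integrable_const c).sub hXi).pos_part
  set A : ℝ := ∫ ω, max (X ω - m) 0 with hA
  set B : ℝ := ∫ ω, max (m - X ω) 0 with hB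
  set K : ℝ := 2 * τ * A - 2 * (1 - τ) * B with hK
  have hDint : Integrable (fun ω => 2 * τ * max (X ω - m) 0 - 2 * (1 - τ) * max (m - X ω) 0) :=
    ((hpos m).const_mul _).sub ((hneg m).const_mul _)
  have hDval : ∫ ω, (2 * τ * max (X ω - m) 0 - 2 * (1 - τ) * max (m - X ω) 0) = K := by
    rw [integral_sub ((hpos m).const_mul _) ((hneg m).const_mul _),
      integral_const_mul, integral_const_mul]
  have lower : ∀ m' : ℝ, K * (m - m')
      ≤ (∫ ω, expectileLoss τ (X ω - m')) - ∫ ω, expectileLoss τ (X ω - m) := by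
    intro m'
    have h1 : ∀ ω, (2 * τ * max (X ω - m) 0 - 2 * (1 - τ) * max (m - X ω) 0) * (m - m')
        ≤ expectileLoss τ (X ω - m') - expectileLoss τ (X ω - m) := by
      intro ω
      have h := expectileLoss_pt_lower hτ0 hτ1 (X ω - m) (X ω - m')
      rw [neg_sub] at h
      have he : X ω - m' - (X ω - m) = m - m' := by ring
      rw [he] at h
      exact h
    have h2 := integral_mono (hDint.mul_const (m - m')) ((hloss m').sub (hloss m)) h1
    simp only [Pi.sub_apply] at h2
    rwa [integral_mul_const, hDval, integral_sub (hloss m') (hloss m)] at h2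
  have upper : ∀ m' : ℝ, (∫ ω, expectileLoss τ (X ω - m')) - (∫ ω, expectileLoss τ (X ω - m))
      ≤ K * (m - m') + (m - m') ^ 2 := by
    intro m'
    have h1 : ∀ ω, expectileLoss τ (X ω - m') - expectileLoss τ (X ω - m)
        ≤ (2 * τ * max (X ω - m) 0 - 2 * (1 - τ) * max (m - X ω) 0) * (m - m')
          + (m - m') ^ 2 := by
      intro ω
      have h := expectileLoss_pt_upper hτ0 hτ1 (X ω - m) (X ω - m')
      rw [neg_sub] at h
      have he : X ω - m' - (X ω - m) = m - m' := by ring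
      rw [he] at h
      exact h
    have h2 := integral_mono ((hloss m').sub (hloss m))
      ((hDint.mul_const (m - m')).add (integrable_const ((m - m') ^ 2))) h1
    simp only [Pi.sub_apply, Pi.add_apply] at h2
    rwa [integral_sub (hloss m') (hloss m),
      integral_add (hDint.mul_const (m - m')) (integrable_const _),
      integral_mul_const, hDval, integral_const, probReal_univ,
      one_smul] at h2
  constructor
  · intro hmin
    have hK0 : K = 0 := by
      have h : ∀ t : ℝ, 0 ≤ K * t + t ^ 2 := by
        intro t
        have h1 := hmin (m - t)
        have h2 := upper (m - t)
        have he : m - (m - t) = t := by ring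
        rw [he] at h2
        linarith
      have := h (-(K / 2))
      nlinarith [sq_nonneg K]
    have : τ * A = (1 - τ) * B := by rw [hK] at hK0; linarith
    exact this
  · intro hfoc m'
    have hK0 : K = 0 := by rw [hK]; linarith
    have := lower m'
    rw [hK0, zero_mul] at this
    linarith
end

section
/- Let X be a bounded real random variable whose support has supremum x* (i.e., x* = esssup X). Then the τ-expectile of X converges to x* as τ tends to 1 from below: lim_{τ→1⁻} m_τ(X) = x*. -/
open MeasureTheory

lemma expectileLoss_nonneg {τ : ℝ} (h0 : 0 ≤ τ) (h1 : τ ≤ 1) (u : ℝ) :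
    0 ≤ expectileLoss τ u := by
  unfold expectileLoss; split <;> nlinarith [sq_nonneg u]

lemma expectileLoss_of_nonpos {τ u : ℝ} (hu : u ≤ 0) :
    expectileLoss τ u = (1 - τ) * u ^ 2 := by
  unfold expectileLoss
  rcases lt_or_eq_of_le hu with h | h
  · rw [if_pos h]
  · subst h; simp

lemma expectileLoss_le_sq {τ : ℝ} (h0 : 0 ≤ τ) (h1 : τ ≤ 1) (u : ℝ) :
    expectileLoss τ u ≤ u ^ 2 := by
  unfold expectileLoss; split <;> nlinarith [sq_nonneg u]

lemma measurable_expectileLoss (τ : ℝ) : Measurable (expectileLoss τ) := by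
  unfold expectileLoss
  exact Measurable.ite (measurableSet_lt measurable_id measurable_const)
    (by fun_prop) (by fun_prop)

set_option maxHeartbeats 2000000 in
/-- for a bounded real random variable `X` with essential supremum
`x* = esssup X`, the `τ`-expectile of `X` (the minimizer `m τ` of the asymmetric
least-squares objective at level `τ`) converges to `x*` as `τ → 1⁻`. -/
theorem expectile_tendsto_esssup {Ω : Type*} [MeasureSpace Ω]
    [IsProbabilityMeasure (volume : Measure Ω)]
    (X : Ω → ℝ) (hmeas : Measurable X) (hbdd : ∃ C : ℝ, ∀ ω, |X ω| ≤ C)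
    (m : ℝ → ℝ)
    (hm : ∀ τ ∈ Set.Ioo (0 : ℝ) 1, ∀ m' : ℝ,
      ∫ ω, expectileLoss τ (X ω - m τ) ≤ ∫ ω, expectileLoss τ (X ω - m')) :
    Filter.Tendsto m (nhdsWithin 1 (Set.Iio 1)) (nhds (essSup X volume)) := by
  obtain ⟨C₀, hC₀⟩ := hbdd
  set C : ℝ := |C₀| with hCdef
  have hC : ∀ ω, |X ω| ≤ C := fun ω => (hC₀ ω).trans (le_abs_self C₀)
  have hC0 : 0 ≤ C := abs_nonneg _
  set x : ℝ := essSup X volume with hxdef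
  -- X ≤ x a.e.
  have hbX : Filter.IsBoundedUnder (· ≤ ·) (ae (volume : Measure Ω)) X :=
    ⟨C, Filter.eventually_map.2 (ae_of_all _ fun ω => (abs_le.1 (hC ω)).2)⟩
  have hXle : ∀ᵐ ω, X ω ≤ x := ae_le_essSup hbX
  -- integrability
  have hint : ∀ τ ∈ Set.Ioo (0:ℝ) 1, ∀ m' : ℝ,
      Integrable (fun ω => expectileLoss τ (X ω - m')) volume := by
    intro τ hτ m'
    refine (integrable_const ((C + |m'|)^2)).mono'
      ((measurable_expectileLoss τ).comp (hmeas.sub_const m')).aestronglyMeasurable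
      (ae_of_all _ fun ω => ?_)
    rw [Real.norm_eq_abs, abs_of_nonneg (expectileLoss_nonneg hτ.1.le hτ.2.le _)]
    have h1 : expectileLoss τ (X ω - m') ≤ (X ω - m')^2 :=
      expectileLoss_le_sq hτ.1.le hτ.2.le _
    have h2 : -C ≤ X ω := (abs_le.1 (hC ω)).1
    have h3 : X ω ≤ C := (abs_le.1 (hC ω)).2
    have h4 : -|m'| ≤ m' := neg_abs_le m'
    have h5 : m' ≤ |m'| := le_abs_self m'
    nlinarith
  -- upper bound: m τ ≤ x for all τ ∈ (0,1)
  have hA : ∀ τ ∈ Set.Ioo (0:ℝ) 1, m τ ≤ x := by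
    intro τ hτ
    by_contra h
    push_neg at h
    set ε : ℝ := m τ - x with hεdef
    have hε : 0 < ε := sub_pos.2 h
    have key : ∀ᵐ ω, expectileLoss τ (X ω - x) + (1 - τ) * ε^2
        ≤ expectileLoss τ (X ω - m τ) := by
      filter_upwards [hXle] with ω hω
      rw [expectileLoss_of_nonpos (by linarith), expectileLoss_of_nonpos (by linarith)]
      have hτ1 : τ ≤ 1 := hτ.2.le
      have hmx : X ω - m τ = (X ω - x) - ε := by rw [hεdef]; ring
      rw [hmx]
      nlinarith [mul_nonneg (mul_nonneg (by linarith : (0:ℝ) ≤ 1 - τ)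
        (by linarith : (0:ℝ) ≤ x - X ω)) hε.le]
    have h1 : ∫ ω, (expectileLoss τ (X ω - x) + (1 - τ) * ε^2)
        ≤ ∫ ω, expectileLoss τ (X ω - m τ) :=
      integral_mono_ae ((hint τ hτ x).add (integrable_const _)) (hint τ hτ (m τ)) key
    rw [integral_add (hint τ hτ x) (integrable_const _), integral_const,
      probReal_univ, one_smul] at h1
    have h2 := hm τ hτ x
    have h3 : 0 < (1 - τ) * ε^2 := mul_pos (by linarith [hτ.2]) (pow_pos hε 2)
    linarith
  -- positivity of upper tail measure
  have hpos : ∀ e : ℝ, 0 < e → 0 < volume {ω | x - e < X ω} := by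
    intro e he
    rcases eq_or_lt_of_le (show 0 ≤ volume {ω | x - e < X ω} from zero_le) with h0 | h0
    · exfalso
      have hmem : (x - e) ∈ {a : ℝ | volume {ω | a < X ω} = 0} := h0.symm
      have hbdd' : BddBelow {a : ℝ | volume {ω | a < X ω} = 0} := by
        refine ⟨-C - 1, fun a ha => ?_⟩
        by_contra hlt
        push_neg at hlt
        have : {ω | a < X ω} = Set.univ := by
          ext ω; simp only [Set.mem_setOf_eq, Set.mem_univ, iff_true]
          have := (abs_le.1 (hC ω)).1
          linarith
        have ha' : volume {ω | a < X ω} = 0 := ha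
        rw [this, measure_univ] at ha'
        exact one_ne_zero ha'
      have hle : sInf {a : ℝ | volume {ω | a < X ω} = 0} ≤ x - e :=
        csInf_le hbdd' hmem
      have hx2 : x = sInf {a : ℝ | volume {ω | a < X ω} = 0} := by
        rw [hxdef]; exact essSup_eq_sInf _ _
      rw [← hx2] at hle
      linarith
    · exact h0
  -- final epsilon-delta argument
  rw [Metric.tendsto_nhdsWithin_nhds]
  intro ε hε
  set A : Set Ω := {ω | x - ε/4 < X ω} with hAdef
  have hAmeas : MeasurableSet A := measurableSet_lt measurable_const hmeas
  have hApos : 0 < volume A := hpos (ε/4) (by linarith)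
  set p : ℝ := (volume A).toReal with hpdef
  have hp : 0 < p := ENNReal.toReal_pos hApos.ne' (measure_ne_top _ _)
  set D : ℝ := C + |x| with hDdef
  have hD0 : 0 ≤ D := add_nonneg hC0 (abs_nonneg _)
  refine ⟨min (1/2) ((ε/4)^2 * p / (2 * (D^2 + 1))), by positivity, ?_⟩
  intro τ hτIio hτdist
  have hτ1 : τ < 1 := hτIio
  have hdist : 1 - τ < min (1/2) ((ε/4)^2 * p / (2 * (D^2 + 1))) := by
    rw [Real.dist_eq, abs_of_neg (by linarith : τ - 1 < 0)] at hτdist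
    linarith
  have hτhalf : 1/2 < τ := by
    have := hdist.trans_le (min_le_left _ _)
    linarith
  have hδ2 : (1 - τ) * (2 * (D^2 + 1)) < (ε/4)^2 * p := by
    have h1 : 1 - τ < (ε/4)^2 * p / (2 * (D^2 + 1)) :=
      hdist.trans_le (min_le_right _ _)
    have h2 : (0:ℝ) < 2 * (D^2 + 1) := by positivity
    calc (1 - τ) * (2 * (D^2 + 1)) < ((ε/4)^2 * p / (2 * (D^2 + 1))) * (2 * (D^2 + 1)) := by
          apply mul_lt_mul_of_pos_right h1 h2
      _ = (ε/4)^2 * p := div_mul_cancel₀ _ h2.ne'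
  have hτIoo : τ ∈ Set.Ioo (0:ℝ) 1 := ⟨by linarith, hτ1⟩
  have hle : m τ ≤ x := hA τ hτIoo
  have hgt : x - ε/2 < m τ := by
    by_contra hcon
    push_neg at hcon
    -- lower bound on the objective at m τ
    have low : ∫ ω, A.indicator (fun _ => τ * (ε/4)^2) ω
        ≤ ∫ ω, expectileLoss τ (X ω - m τ) := by
      refine integral_mono ((integrable_const _).indicator hAmeas) (hint τ hτIoo (m τ))
        fun ω => ?_
      by_cases hω : ω ∈ A
      · rw [Set.indicator_of_mem hω]
        have h1 : x - ε/4 < X ω := hω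
        have h2 : ε/4 < X ω - m τ := by linarith
        have h3 : expectileLoss τ (X ω - m τ) = τ * (X ω - m τ)^2 :=
          if_neg (not_lt.2 (by linarith))
        rw [h3]
        have hτ0 : 0 < τ := hτIoo.1
        have hsq : (ε/4)^2 ≤ (X ω - m τ)^2 := by
          nlinarith [mul_pos (by linarith : (0:ℝ) < X ω - m τ - ε/4)
            (by linarith : (0:ℝ) < X ω - m τ + ε/4)]
        exact mul_le_mul_of_nonneg_left hsq hτ0.le
      · rw [Set.indicator_of_notMem hω]
        exact expectileLoss_nonneg hτIoo.1.le hτIoo.2.le _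
    rw [integral_indicator_const _ hAmeas] at low
    -- upper bound on the objective at x
    have up : ∫ ω, expectileLoss τ (X ω - x) ≤ (1 - τ) * D^2 := by
      have : ∫ ω, expectileLoss τ (X ω - x) ≤ ∫ _ω : Ω, (1 - τ) * D^2 := by
        refine integral_mono_ae (hint τ hτIoo x) (integrable_const _) ?_
        filter_upwards [hXle] with ω hω
        rw [expectileLoss_of_nonpos (by linarith)]
        have h2 : -C ≤ X ω := (abs_le.1 (hC ω)).1
        have h3 : X ω ≤ C := (abs_le.1 (hC ω)).2
        have h4 : -|x| ≤ x := neg_abs_le x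
        have h5 : x ≤ |x| := le_abs_self x
        have hsq : (X ω - x)^2 ≤ D^2 := by nlinarith
        nlinarith [hτIoo.2.le]
      rwa [integral_const, probReal_univ, one_smul] at this
    have hmid := hm τ hτIoo x
    have hchain : p * (τ * (ε/4)^2) ≤ (1 - τ) * D^2 := by
      have := le_trans low (le_trans hmid up)
      simp only [smul_eq_mul] at this; exact this
    nlinarith [mul_pos (mul_pos hp (show (0:ℝ) < (ε/4)^2 by positivity))
      (show (0:ℝ) < τ - 1/2 by linarith)]
  rw [Real.dist_eq, abs_lt]
  constructor <;> linarith
end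

section
/- Let n ≥ 1, let S₁, …, Sₙ be finite nonempty sets, let Qᵢ : Sᵢ → ℝ with Vᵢ* = max_{aᵢ∈Sᵢ} Qᵢ(aᵢ), let wᵢ^v ≥ 0 be nonnegative weights, let wᵢ^q : S₁ × ⋯ × Sₙ → ℝ be nonnegative weight functions, and let V_share ∈ ℝ. Define Q_tot*(a) = Σ_{i=1}^n wᵢ^v·Vᵢ* + V_share + Σ_{i=1}^n wᵢ^q(a)·(Qᵢ(aᵢ) − Vᵢ*) for joint actions a ∈ S₁ × ⋯ × Sₙ. Then max_{a ∈ S₁ × ⋯ × Sₙ} Q_tot*(a) = Σ_{i=1}^n wᵢ^v·Vᵢ* + V_share. -/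
/-- for the coupled-value-factorized global Q-function
`Q_tot*(a) = Σᵢ wᵢ^v·Vᵢ* + V_share + Σᵢ wᵢ^q(a)·(Qᵢ(aᵢ) − Vᵢ*)` with
`Vᵢ* = max_{aᵢ∈Sᵢ} Qᵢ(aᵢ)` and nonnegative weights, the maximum of `Q_tot*` over the
product of the (finite nonempty) sets `Sᵢ` equals `Σᵢ wᵢ^v·Vᵢ* + V_share`. -/
theorem omac_max_factored_qtot (n : ℕ) (hn : 1 ≤ n) (S : Fin n → Type*)
    [∀ i, Fintype (S i)] [∀ i, Nonempty (S i)]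
    (Q : ∀ i, S i → ℝ)
    (Vstar : Fin n → ℝ)
    (hV : ∀ i, Vstar i = Finset.univ.sup' Finset.univ_nonempty (Q i))
    (wv : Fin n → ℝ) (hwv : ∀ i, 0 ≤ wv i)
    (wq : Fin n → (∀ i, S i) → ℝ) (hwq : ∀ i a, 0 ≤ wq i a)
    (Vshare : ℝ)
    (Qtot : (∀ i, S i) → ℝ)
    (hQtot : ∀ a, Qtot a =
      ∑ i, wv i * Vstar i + Vshare + ∑ i, wq i a * (Q i (a i) - Vstar i)) :
    Finset.univ.sup' Finset.univ_nonempty Qtot = ∑ i, wv i * Vstar i + Vshare := by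
  apply le_antisymm
  · apply Finset.sup'_le
    intro a _
    rw [hQtot a]
    have : ∑ i, wq i a * (Q i (a i) - Vstar i) ≤ 0 := by
      apply Finset.sum_nonpos
      intro i _
      apply mul_nonpos_of_nonneg_of_nonpos (hwq i a)
      have : Q i (a i) ≤ Vstar i := by
        rw [hV i]; exact Finset.le_sup' _ (Finset.mem_univ _)
      linarith
    linarith
  · -- exhibit a maximizer
    have hmax : ∀ i, ∃ b : S i, Q i b = Vstar i := by
      intro i
      obtain ⟨b, _, hb⟩ := Finset.exists_mem_eq_sup' (Finset.univ_nonempty) (Q i)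
      exact ⟨b, by rw [hV i, hb]⟩
    choose a ha using hmax
    have : Qtot a = ∑ i, wv i * Vstar i + Vshare := by
      rw [hQtot a]
      have : ∑ i, wq i a * (Q i (a i) - Vstar i) = 0 := by
        apply Finset.sum_eq_zero
        intro i _
        rw [ha i]; ring
      linarith
    rw [← this]
    exact Finset.le_sup' _ (Finset.mem_univ a)
end
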